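/- arXiv:1901.01159 — 6 statements merged into one kernel-verified Lean document; each statement's English description precedes it below -/
import Mathlib

section
/- For every positive integer k, if N = 10^k − 1 (which is odd), then the k-th iterate of the map T (where T(n) = n/2 for even n and T(n) = (3n+1)/2 for odd n) applied to N equals 15^k − 1, and this is the first even integer in the Collatz sequence starting at N. -/
def T (n : ℕ) : ℕ := if n % 2 = 0 then n / 2 else (3 * n + 1) / 2

lemma T_step (x : ℕ) (hx : 0 < x) : T (2 * x - 1) = 3 * x - 1 := by
  have h1 : (2 * x - 1) % 2 = 1 := by omega
  simp only [T, h1, if_neg Nat.one_ne_zero]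
  omega

theorem stmt2 (k : ℕ) (hk : 0 < k) (N : ℕ) (hN : N = 10 ^ k - 1) :
    Odd N ∧ T^[k] N = 15 ^ k - 1 ∧ Even (T^[k] N) ∧ ∀ j < k, Odd (T^[j] N) := by
  have key : ∀ j ≤ k, T^[j] N = 2 ^ (k - j) * (3 ^ j * 5 ^ k) - 1 := by
    intro j hj
    induction j with
    | zero =>
      simp only [Function.iterate_zero_apply, Nat.sub_zero, pow_zero, one_mul, hN]
      rw [show (10:ℕ) = 2 * 5 from rfl, mul_pow]
    | succ j ih =>
      rw [Function.iterate_succ_apply', ih (by omega)]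
      have h1 : 2 ^ (k - j) * (3 ^ j * 5 ^ k) = 2 * (2 ^ (k - (j+1)) * (3 ^ j * 5 ^ k)) := by
        have h2 : k - j = (k - (j+1)) + 1 := by omega
        rw [h2, pow_succ]; ring
      rw [h1, T_step _ (by positivity)]
      have : 3 * (2 ^ (k - (j+1)) * (3 ^ j * 5 ^ k)) = 2 ^ (k - (j+1)) * (3 ^ (j+1) * 5 ^ k) := by
        rw [pow_succ]; ring
      rw [this]
  have odd_lt : ∀ j < k, Odd (T^[j] N) := by
    intro j hj
    rw [key j hj.le]
    have h2 : k - j = (k - (j+1)) + 1 := by omega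
    rw [h2, pow_succ]
    have hp : 0 < 2 ^ (k - (j+1)) * (3 ^ j * 5 ^ k) := by positivity
    rw [Nat.odd_iff]
    have : 2 ^ (k - (j+1)) * 2 * (3 ^ j * 5 ^ k) = 2 * (2 ^ (k - (j+1)) * (3 ^ j * 5 ^ k)) := by ring
    rw [this]; omega
  have hk' : T^[k] N = 15 ^ k - 1 := by
    rw [key k le_rfl, Nat.sub_self, pow_zero, one_mul,
      show (15:ℕ) = 3 * 5 from rfl, mul_pow]
  refine ⟨?_, hk', ?_, odd_lt⟩
  · simpa using odd_lt 0 hk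
  · rw [hk', Nat.even_sub (Nat.one_le_pow _ _ (by norm_num))]
    simp [Nat.odd_iff, Nat.pow_mod]
end

section
/- Let k, l be positive integers and m an odd positive integer such that 3^k divides 2^l·m + 1, and set N = 2^k·(2^l·m + 1)/3^k − 1. If N is odd, then the (l+k)-th iterate of the accelerated Collatz map T applied to N equals m. -/
lemma T_halve (l m : ℕ) : T^[l] (2 ^ l * m) = m := by
  induction l with
  | zero => simp
  | succ l ih =>
    rw [Function.iterate_succ_apply]
    have h : T (2 ^ (l + 1) * m) = 2 ^ l * m := by
      unfold T
      have : 2 ^ (l + 1) * m = 2 * (2 ^ l * m) := by ring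
      rw [this]
      simp
    rw [h, ih]

lemma T_up (k : ℕ) : ∀ c : ℕ, 0 < c → T^[k] (2 ^ k * c - 1) = 3 ^ k * c - 1 := by
  induction k with
  | zero => simp
  | succ k ih =>
    intro c hc
    rw [Function.iterate_succ_apply]
    have hx : 1 ≤ 2 ^ k * c := Nat.one_le_iff_ne_zero.mpr (by positivity)
    have h : T (2 ^ (k + 1) * c - 1) = 2 ^ k * (3 * c) - 1 := by
      unfold T
      have e1 : 2 ^ (k + 1) * c = 2 * (2 ^ k * c) := by ring
      have e2 : 2 ^ k * (3 * c) = 3 * (2 ^ k * c) := by ring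
      rw [e1, e2, if_neg (by omega)]
      omega
    rw [h, ih (3 * c) (by omega)]
    ring_nf

theorem stmt3 (k l m : ℕ) (hk : 0 < k) (hl : 0 < l) (hm : 0 < m) (hmodd : Odd m)
    (hdvd : 3 ^ k ∣ 2 ^ l * m + 1) (N : ℕ) (hN : N = 2 ^ k * (2 ^ l * m + 1) / 3 ^ k - 1)
    (hNodd : Odd N) : T^[l + k] N = m := by
  obtain ⟨c, hcdef⟩ := hdvd
  have h3 : (0:ℕ) < 3 ^ k := by positivity
  have hc : 0 < c := by
    rcases Nat.eq_zero_or_pos c with h | h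
    · subst h; simp at hcdef
    · exact h
  have hNc : N = 2 ^ k * c - 1 := by
    rw [hN, hcdef, mul_comm (3 ^ k) c, Nat.mul_div_assoc _ (dvd_refl _ |>.mul_left c)]
    rw [Nat.mul_div_cancel _ h3]
  have hstep : T^[k] N = 2 ^ l * m := by
    rw [hNc, T_up k c hc, ← hcdef]
    simp
  rw [Function.iterate_add_apply, hstep, T_halve]
end

section
/- Let k, l be positive integers such that 3^k divides 2^l + 1, and set N = 2^k·(2^l + 1)/3^k − 1. If N is odd, then the (l+k)-th iterate of the accelerated Collatz map T applied to N equals 1. -/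
lemma T_halve_s4 (j : ℕ) : T^[j] (2 ^ j) = 1 := by
  induction j with
  | zero => simp
  | succ n ih =>
    rw [Function.iterate_succ_apply]
    have h : T (2 ^ (n + 1)) = 2 ^ n := by
      have : 2 ^ (n + 1) = 2 ^ n * 2 := by ring
      simp [T, this]
    rw [h, ih]

lemma T_triple (k : ℕ) : ∀ m : ℕ, 0 < m → T^[k] (2 ^ k * m - 1) = 3 ^ k * m - 1 := by
  induction k with
  | zero => intro m hm; simp
  | succ n ih =>
    intro m hm
    rw [Function.iterate_succ_apply]
    have hp : 0 < 2 ^ n * m := by positivity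
    have h2 : 2 ^ (n + 1) * m = 2 * (2 ^ n * m) := by ring
    have h3 : 3 ^ (n + 1) * m = 3 ^ n * (3 * m) := by ring
    have h : T (2 ^ (n + 1) * m - 1) = 2 ^ n * (3 * m) - 1 := by
      have hodd : ¬ (2 ^ (n + 1) * m - 1) % 2 = 0 := by omega
      have h4 : 2 ^ n * (3 * m) = 3 * (2 ^ n * m) := by ring
      simp only [T, if_neg hodd]
      omega
    rw [h, ih (3 * m) (by omega), h3]

theorem stmt4 (k l : ℕ) (hk : 0 < k) (hl : 0 < l) (hdvd : 3 ^ k ∣ 2 ^ l + 1)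
    (N : ℕ) (hN : N = 2 ^ k * (2 ^ l + 1) / 3 ^ k - 1) (hNodd : Odd N) :
    T^[l + k] N = 1 := by
  obtain ⟨m, hm⟩ := hdvd
  have h3 : 0 < 3 ^ k := by positivity
  have hmpos : 0 < m := by
    rcases Nat.eq_zero_or_pos m with h | h
    · subst h; simp at hm
    · exact h
  have hNm : N = 2 ^ k * m - 1 := by
    rw [hN, hm, Nat.mul_div_assoc _ ⟨m, rfl⟩, Nat.mul_div_cancel_left m h3]
  rw [Function.iterate_add_apply, hNm, T_triple k m hmpos, ← hm]
  simpa using T_halve_s4 l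
end

section
/- For every positive integer q, 3 divides 4^q − 1, and the 2q-th iterate of the accelerated Collatz map T applied to N = (4^q − 1)/3 equals 1. -/
lemma T_pow2 (k : ℕ) : T^[k] (2 ^ k) = 1 := by
  induction k with
  | zero => simp [T]
  | succ k ih =>
    rw [Function.iterate_succ_apply]
    have : T (2 ^ (k + 1)) = 2 ^ k := by
      simp [T, pow_succ, Nat.mul_mod_left, Nat.mul_div_cancel]
    rw [this, ih]

theorem stmt8 (q : ℕ) (hq : 0 < q) :
    3 ∣ 4 ^ q - 1 ∧ T^[2 * q] ((4 ^ q - 1) / 3) = 1 := by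
  have hmod : 4 ^ q % 3 = 1 := by
    have := Nat.pow_mod 4 q 3
    simpa using this
  have hpos : 1 ≤ 4 ^ q := Nat.one_le_pow _ _ (by norm_num)
  have h3 : 3 ∣ 4 ^ q - 1 := by omega
  refine ⟨h3, ?_⟩
  obtain ⟨N, hN⟩ := h3
  have h4 : 4 ^ q = 3 * N + 1 := by omega
  have hpow : (4 : ℕ) ^ q = 2 ^ (2 * q) := by
    rw [pow_mul]; norm_num
  have heven : 2 ∣ 4 ^ q := by
    rw [hpow]
    exact dvd_pow_self 2 (by omega)
  have hNodd : N % 2 = 1 := by omega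
  have hNval : (4 ^ q - 1) / 3 = N := by omega
  rw [hNval]
  have h2q : 2 * q = (2 * q - 1) + 1 := by omega
  have hTN : T N = 2 ^ (2 * q - 1) := by
    have : 3 * N + 1 = 2 * 2 ^ (2 * q - 1) := by
      rw [← h4, hpow]
      conv_lhs => rw [h2q]
      rw [pow_succ, Nat.mul_comm]
    simp [T, hNodd, this]
  rw [h2q, Function.iterate_succ_apply, hTN, T_pow2]
end

section
/- For k = 2 and any positive integer l with 2^l ≡ −1 (mod 9), the number N = 4·(2^l + 1)/9 − 1 is odd, and the Collatz sequence starting at N reaches 1 in exactly l + 2 steps; in particular for l = 15, N = 14563 and T^[17](14563) = 1. -/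
lemma T_two_pow (a : ℕ) : T (2 ^ (a + 1)) = 2 ^ a := by
  have h : 2 ^ (a + 1) = 2 ^ a * 2 := by ring
  simp [T, h]

lemma T_iter_two_pow (l : ℕ) : ∀ i ≤ l, T^[i] (2 ^ l) = 2 ^ (l - i) := by
  intro i
  induction i with
  | zero => simp
  | succ n ih =>
    intro h
    have hn : n ≤ l := Nat.le_of_succ_le h
    rw [Function.iterate_succ_apply', ih hn]
    have : l - n = (l - (n + 1)) + 1 := by omega
    rw [this, T_two_pow]

lemma T_odd (m : ℕ) (hm : m % 2 = 1) : T m = (3 * m + 1) / 2 := by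
  simp [T, hm]

theorem stmt16 (l : ℕ) (hl : 0 < l) (hmod : 2 ^ l % 9 = 8) (N : ℕ)
    (hN : N = 4 * (2 ^ l + 1) / 9 - 1) :
    Odd N ∧ T^[l + 2] N = 1 ∧ (∀ j < l + 2, T^[j] N ≠ 1) ∧
    (4 * (2 ^ 15 + 1) / 9 - 1 = 14563 ∧ T^[17] 14563 = 1) := by
  have hpos : 1 ≤ 2 ^ l := Nat.one_le_two_pow
  obtain ⟨m, hm⟩ : ∃ m, 2 ^ l + 1 = 9 * m := ⟨(2 ^ l + 1) / 9, by omega⟩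
  have hm1 : 1 ≤ m := by omega
  have hNm : N = 4 * m - 1 := by omega
  have hT1 : T N = 6 * m - 1 := by
    rw [T_odd N (by omega), hNm]; omega
  have hT2 : T (6 * m - 1) = 2 ^ l := by
    rw [T_odd _ (by omega)]; omega
  have hiter : ∀ i ≤ l, T^[i + 2] N = 2 ^ (l - i) := by
    intro i hi
    have h2 : T^[2] N = 2 ^ l := by
      simp [Function.iterate_succ_apply, hT1, hT2]
    rw [Function.iterate_add_apply, h2, T_iter_two_pow l i hi]
  refine ⟨⟨2 * m - 1, by omega⟩, ?_, ?_, ?_, ?_⟩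
  · have := hiter l le_rfl
    simpa using this
  · intro j hj
    match j with
    | 0 => simp; omega
    | 1 => simp [hT1]; omega
    | (i + 2) =>
      have hi : i < l := by omega
      rw [hiter i hi.le]
      have : 1 ≤ l - i := by omega
      have := Nat.one_lt_two_pow_iff.mpr (by omega : l - i ≠ 0)
      omega
  · norm_num
  · decide
end

section
/- For every positive integer n and every odd positive integer m, 2^(3^(n−1)·m) ≡ −1 (mod 3^n). -/
lemma aux17 : ∀ n : ℕ, (3 : ℤ) ^ (n + 1) ∣ 2 ^ (3 ^ n) + 1 := by
  intro n
  induction n with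
  | zero => norm_num
  | succ k ih =>
    set x : ℤ := 2 ^ (3 ^ k) with hx
    have h1 : (2 : ℤ) ^ (3 ^ (k + 1)) = x ^ 3 := by
      rw [hx, ← pow_mul, pow_succ]
    have h2 : x ^ 3 + 1 = (x + 1) * (x ^ 2 - x + 1) := by ring
    have h3 : (3 : ℤ) ∣ x + 1 := dvd_trans (dvd_pow_self 3 (Nat.succ_ne_zero k)) ih
    have h4 : (3 : ℤ) ∣ x ^ 2 - x + 1 := by
      have : x ^ 2 - x + 1 = (x + 1) ^ 2 - 3 * (x + 1) + 3 := by ring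
      rw [this]
      exact dvd_add (dvd_sub (h3.trans (dvd_pow_self _ two_ne_zero)) (dvd_mul_right 3 (x + 1))) dvd_rfl
    rw [h1, h2, pow_succ]
    exact mul_dvd_mul ih h4

theorem stmt17 (n m : ℕ) (hn : 0 < n) (hm : 0 < m) (hmodd : Odd m) :
    (2 : ℤ) ^ (3 ^ (n - 1) * m) ≡ -1 [ZMOD (3 : ℤ) ^ n] := by
  have h0 : (3 : ℤ) ^ n ∣ 2 ^ (3 ^ (n - 1)) + 1 := by
    have := aux17 (n - 1)
    rwa [Nat.sub_add_cancel hn] at this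
  set x : ℤ := 2 ^ (3 ^ (n - 1)) with hx
  have h1 : x + 1 ∣ x ^ m + 1 := by
    simpa using Odd.add_dvd_pow_add_pow x 1 hmodd
  have h2 : (3 : ℤ) ^ n ∣ x ^ m + 1 := h0.trans h1
  have h3 : (2 : ℤ) ^ (3 ^ (n - 1) * m) = x ^ m := by rw [hx, pow_mul]
  rw [h3, Int.ModEq]
  have : x ^ m ≡ -1 [ZMOD (3:ℤ)^n] := (Int.modEq_iff_dvd.mpr (by simpa using h2)).symm
  exact this
end
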